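/- Let N > 0 and K > N an integer. Then for all t > 0 and d ≥ 0: ∫_0^t (s/t)^{K-N} e^{-c d^2/t} ds/s + ∫_t^∞ e^{-c d^2/s} (t/s)^N ds/s ≤ C ( e^{-c d^2/(2t)} + (1 + d^2/t)^{-N} ), with C depending only on N, K, c. -/

import Mathlib

open MeasureTheory Set Real

/-!
With `a = d²/t`, the first integral equals `e^{-c d²/t}/(K - N)` exactly. The second is split
at `s = t + d² = (1 + a) t`. Beyond that point `e^{-c d²/s} ≤ 1` and the remaining integral of
`(t/s)^N ds/s` is `(1 + a)^{-N}/N`. Below it, `e^{-x} ≤ e K! (1 + x)^{-K}` together with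
`1 + c d²/s ≥ min 1 c · (1 + a) t/s` gives the integrand the bound
`(1 + a)^{-K} (s/t)^{K-N} ds/s` up to a constant, and since `K > N` this integrates to
at most `(1 + a)^{-N}/(K - N)`.
-/

theorem lintegral_Ioc_div_rpow_mul_inv {β t a b : ℝ} (hβ : 0 < β) (ht : 0 < t) (ha : 0 ≤ a)
    (hab : a ≤ b) :
    ∫⁻ s in Ioc a b, ENNReal.ofReal ((s / t) ^ β * s⁻¹) =
      ENNReal.ofReal (((b / t) ^ β - (a / t) ^ β) / β) := by
  have hint : IntegrableOn (fun s : ℝ => s ^ (β - 1)) (Ioc a b) := by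
    rw [← intervalIntegrable_iff_integrableOn_Ioc_of_le hab]
    exact intervalIntegral.intervalIntegrable_rpow' (by linarith)
  have hnn : 0 ≤ᵐ[volume.restrict (Ioc a b)] fun s : ℝ => (t ^ β)⁻¹ * s ^ (β - 1) := by
    filter_upwards [ae_restrict_mem measurableSet_Ioc] with s hs
    have := rpow_nonneg (ha.trans hs.1.le) (β - 1)
    positivity
  have hpt : EqOn (fun s ↦ ENNReal.ofReal ((s / t) ^ β * s⁻¹))
      (fun s ↦ ENNReal.ofReal ((t ^ β)⁻¹ * s ^ (β - 1))) (Ioc a b) := fun s hs ↦ by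
    have hs : 0 < s := ha.trans_lt hs.1
    simp only [div_rpow hs.le ht.le, rpow_sub_one hs.ne']
    ring_nf
  rw [setLIntegral_congr_fun measurableSet_Ioc hpt,
    ← ofReal_integral_eq_lintegral_ofReal (hint.const_mul _) hnn, integral_const_mul,
    ← intervalIntegral.integral_of_le hab, integral_rpow (Or.inl (by linarith)),
    sub_add_cancel, div_rpow ha ht.le, div_rpow (ha.trans hab) ht.le]
  ring_nf

theorem lintegral_Ioi_div_rpow_mul_inv {N t T : ℝ} (hN : 0 < N) (ht : 0 ≤ t) (hT : 0 < T) :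
    ∫⁻ s in Ioi T, ENNReal.ofReal ((t / s) ^ N * s⁻¹) =
      ENNReal.ofReal ((t / T) ^ N / N) := by
  have hint := (integrableOn_Ioi_rpow_of_lt (by linarith : -N - 1 < -1) hT).const_mul (t ^ N)
  have hnn : 0 ≤ᵐ[volume.restrict (Ioi T)] fun s : ℝ => t ^ N * s ^ (-N - 1) := by
    filter_upwards [ae_restrict_mem measurableSet_Ioi] with s hs
    have := rpow_nonneg (hT.trans hs).le (-N - 1)
    have := rpow_nonneg ht N
    positivity
  have hpt : EqOn (fun s ↦ ENNReal.ofReal ((t / s) ^ N * s⁻¹))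
      (fun s ↦ ENNReal.ofReal (t ^ N * s ^ (-N - 1))) (Ioi T) := fun s hs ↦ by
    have hs : 0 < s := hT.trans hs
    simp only [div_rpow ht hs.le, rpow_sub_one hs.ne', rpow_neg hs.le]
    ring_nf
  rw [setLIntegral_congr_fun measurableSet_Ioi hpt,
    ← ofReal_integral_eq_lintegral_ofReal hint hnn, integral_const_mul,
    integral_Ioi_rpow_of_lt (by linarith) hT, sub_add_cancel, div_rpow ht hT.le, rpow_neg hT.le]
  ring_nf

theorem exp_neg_mul_one_add_pow_le (K : ℕ) {x : ℝ} (hx : 0 ≤ x) :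
    exp (-x) * (1 + x) ^ K ≤ exp 1 * K.factorial := by
  have h := pow_div_factorial_le_exp (x := 1 + x) (by linarith) K
  rw [div_le_iff₀ (by positivity)] at h
  calc exp (-x) * (1 + x) ^ K ≤ exp (-x) * (exp (1 + x) * K.factorial) := by gcongr
    _ = exp 1 * K.factorial := by rw [← mul_assoc, ← exp_add]; ring_nf

theorem lintegral_Ioo_div_rpow_mul_exp_le {β c t : ℝ} (d : ℝ) (hβ : 0 < β) (hc : 0 ≤ c)
    (ht : 0 < t) :
    ∫⁻ s in Ioo 0 t, ENNReal.ofReal ((s / t) ^ β * exp (-c * d ^ 2 / t) * s⁻¹) ≤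
      ENNReal.ofReal (exp (-c * d ^ 2 / (2 * t)) / β) := by
  have hpt : ∀ s, ENNReal.ofReal ((s / t) ^ β * exp (-c * d ^ 2 / t) * s⁻¹) =
      ENNReal.ofReal (exp (-c * d ^ 2 / t)) * ENNReal.ofReal ((s / t) ^ β * s⁻¹) := fun s ↦ by
    rw [← ENNReal.ofReal_mul (exp_nonneg _)]; ring_nf
  have hexp : exp (-c * d ^ 2 / t) ≤ exp (-c * d ^ 2 / (2 * t)) := by
    refine exp_le_exp.2 ?_
    have hneg : -c * d ^ 2 / (2 * t) ≤ 0 :=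
      div_nonpos_of_nonpos_of_nonneg (by nlinarith [sq_nonneg d]) (by positivity)
    have htwice : -c * d ^ 2 / t = 2 * (-c * d ^ 2 / (2 * t)) := by field_simp
    linarith
  rw [setLIntegral_congr Ioo_ae_eq_Ioc, funext hpt,
    lintegral_const_mul' _ _ ENNReal.ofReal_ne_top,
    lintegral_Ioc_div_rpow_mul_inv hβ ht le_rfl ht.le, div_self ht.ne', zero_div,
    one_rpow, zero_rpow hβ.ne', sub_zero, ← ENNReal.ofReal_mul (exp_nonneg _)]
  exact ENNReal.ofReal_le_ofReal (by rw [mul_one_div]; gcongr)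

theorem exp_neg_mul_sq_div_mul_pow_le {c t s : ℝ} (d : ℝ) (K : ℕ) (hc : 0 < c) (ht : 0 < t)
    (hts : t ≤ s) :
    exp (-c * d ^ 2 / s) * ((1 + d ^ 2 / t) * (t / s)) ^ K ≤
      exp 1 * K.factorial / min 1 c ^ K := by
  have hs : 0 < s := ht.trans_le hts
  -- `min 1 c` absorbs `c` in front of `d²` and the factor `1` in front of `t / s ≤ 1`
  have hlow : min 1 c * ((1 + d ^ 2 / t) * (t / s)) ≤ 1 + c * d ^ 2 / s := by
    have h1 : min 1 c * (t / s) ≤ 1 :=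
      mul_le_one₀ (min_le_left _ _) (by positivity) ((div_le_one hs).2 hts)
    have h2 : min 1 c * (d ^ 2 / s) ≤ c * d ^ 2 / s := by
      rw [mul_div_assoc]; gcongr; exact min_le_right _ _
    calc min 1 c * ((1 + d ^ 2 / t) * (t / s))
        = min 1 c * (t / s) + min 1 c * (d ^ 2 / s) := by field_simp
      _ ≤ 1 + c * d ^ 2 / s := add_le_add h1 h2
  rw [le_div_iff₀ (by positivity), mul_assoc, ← mul_pow, mul_comm _ (min 1 c), neg_mul,
    neg_div]
  calc exp (-(c * d ^ 2 / s)) * (min 1 c * ((1 + d ^ 2 / t) * (t / s))) ^ K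
      ≤ exp (-(c * d ^ 2 / s)) * (1 + c * d ^ 2 / s) ^ K := by gcongr
    _ ≤ exp 1 * K.factorial := exp_neg_mul_one_add_pow_le K (by positivity)

theorem exp_neg_mul_sq_div_mul_rpow_le {N c t s : ℝ} (d : ℝ) {K : ℕ} (hc : 0 < c) (ht : 0 < t)
    (hts : t ≤ s) :
    exp (-c * d ^ 2 / s) * (t / s) ^ N * s⁻¹ ≤ exp 1 * K.factorial / min 1 c ^ K *
      (1 + d ^ 2 / t) ^ (-(K : ℝ)) * ((s / t) ^ ((K : ℝ) - N) * s⁻¹) := by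
  have hs : 0 < s := ht.trans_le hts
  have hu : 0 < (1 + d ^ 2 / t) * (t / s) := by positivity
  have hexp : exp (-c * d ^ 2 / s) ≤
      exp 1 * K.factorial / min 1 c ^ K * ((1 + d ^ 2 / t) * (t / s)) ^ (-(K : ℝ)) := by
    rw [rpow_neg hu.le, rpow_natCast, ← div_eq_mul_inv, le_div_iff₀ (by positivity)]
    exact exp_neg_mul_sq_div_mul_pow_le d K hc ht hts
  have hpow : ((1 + d ^ 2 / t) * (t / s)) ^ (-(K : ℝ)) * (t / s) ^ N =
      (1 + d ^ 2 / t) ^ (-(K : ℝ)) * (s / t) ^ ((K : ℝ) - N) := by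
    rw [mul_rpow (by positivity) (by positivity), mul_assoc, ← rpow_add (by positivity),
      ← inv_div s t, inv_rpow (by positivity), ← rpow_neg (by positivity), neg_add, neg_neg,
      ← sub_eq_add_neg]
  calc exp (-c * d ^ 2 / s) * (t / s) ^ N * s⁻¹
      ≤ exp 1 * K.factorial / min 1 c ^ K * ((1 + d ^ 2 / t) * (t / s)) ^ (-(K : ℝ)) *
          (t / s) ^ N * s⁻¹ := by gcongr
    _ = _ := by rw [mul_assoc (exp 1 * K.factorial / min 1 c ^ K), hpow]; ring

theorem lintegral_Ioc_exp_neg_mul_sq_div_le {N c t : ℝ} (d : ℝ) {K : ℕ} (hc : 0 < c)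
    (hK : N < K) (ht : 0 < t) :
    ∫⁻ s in Ioc t (t + d ^ 2), ENNReal.ofReal (exp (-c * d ^ 2 / s) * (t / s) ^ N * s⁻¹) ≤
      ENNReal.ofReal
        (exp 1 * K.factorial / min 1 c ^ K / (K - N) * (1 + d ^ 2 / t) ^ (-N)) := by
  set D := exp 1 * K.factorial / min 1 c ^ K
  set a := d ^ 2 / t
  have ha : 0 ≤ a := by positivity
  have hβ : 0 < (K : ℝ) - N := by linarith
  have hT : (t + d ^ 2) / t = 1 + a := by simp only [a]; field_simp
  calc ∫⁻ s in Ioc t (t + d ^ 2), ENNReal.ofReal (exp (-c * d ^ 2 / s) * (t / s) ^ N * s⁻¹)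
      ≤ ∫⁻ s in Ioc t (t + d ^ 2), ENNReal.ofReal (D * (1 + a) ^ (-(K : ℝ))) *
          ENNReal.ofReal ((s / t) ^ ((K : ℝ) - N) * s⁻¹) := by
        refine setLIntegral_mono' measurableSet_Ioc fun s hs ↦ ?_
        rw [← ENNReal.ofReal_mul (by positivity)]
        exact ENNReal.ofReal_le_ofReal (exp_neg_mul_sq_div_mul_rpow_le d hc ht hs.1.le)
    _ = ENNReal.ofReal (D * (1 + a) ^ (-(K : ℝ)) *
          (((1 + a) ^ ((K : ℝ) - N) - 1) / ((K : ℝ) - N))) := by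
        rw [lintegral_const_mul' _ _ ENNReal.ofReal_ne_top,
          lintegral_Ioc_div_rpow_mul_inv hβ ht ht.le (by nlinarith), hT, div_self ht.ne',
          one_rpow, ← ENNReal.ofReal_mul (by positivity)]
    _ ≤ ENNReal.ofReal (D / ((K : ℝ) - N) * (1 + a) ^ (-N)) := by
        refine ENNReal.ofReal_le_ofReal ?_
        have hpow : (1 + a) ^ (-(K : ℝ)) * (1 + a) ^ ((K : ℝ) - N) = (1 + a) ^ (-N) := by
          rw [← rpow_add (by positivity)]; ring_nf
        calc D * (1 + a) ^ (-(K : ℝ)) * (((1 + a) ^ ((K : ℝ) - N) - 1) / ((K : ℝ) - N))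
            ≤ D * (1 + a) ^ (-(K : ℝ)) * ((1 + a) ^ ((K : ℝ) - N) / ((K : ℝ) - N)) := by
              gcongr; linarith
          _ = D / ((K : ℝ) - N) * (1 + a) ^ (-N) := by rw [← hpow]; ring

theorem lintegral_Ioi_add_sq_exp_neg_mul_sq_div_le {N c t : ℝ} (d : ℝ) (hN : 0 < N)
    (hc : 0 ≤ c) (ht : 0 < t) :
    ∫⁻ s in Ioi (t + d ^ 2), ENNReal.ofReal (exp (-c * d ^ 2 / s) * (t / s) ^ N * s⁻¹) ≤
      ENNReal.ofReal (1 / N * (1 + d ^ 2 / t) ^ (-N)) := by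
  have hT : 0 < t + d ^ 2 := by positivity
  have hTt : (t + d ^ 2) / t = 1 + d ^ 2 / t := by field_simp
  calc ∫⁻ s in Ioi (t + d ^ 2), ENNReal.ofReal (exp (-c * d ^ 2 / s) * (t / s) ^ N * s⁻¹)
      ≤ ∫⁻ s in Ioi (t + d ^ 2), ENNReal.ofReal ((t / s) ^ N * s⁻¹) := by
        refine setLIntegral_mono' measurableSet_Ioi fun s hs ↦ ENNReal.ofReal_le_ofReal ?_
        have hs : 0 < s := hT.trans hs
        have hexp : exp (-c * d ^ 2 / s) ≤ 1 :=
          exp_le_one_iff.2 (by rw [neg_mul, neg_div, neg_nonpos]; positivity)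
        calc exp (-c * d ^ 2 / s) * (t / s) ^ N * s⁻¹ ≤ 1 * (t / s) ^ N * s⁻¹ := by gcongr
          _ = (t / s) ^ N * s⁻¹ := by rw [one_mul]
    _ = ENNReal.ofReal (1 / N * (1 + d ^ 2 / t) ^ (-N)) := by
        rw [lintegral_Ioi_div_rpow_mul_inv hN ht.le hT, ← inv_div (t + d ^ 2) t,
          inv_rpow (by positivity), ← rpow_neg (by positivity), hTt, div_eq_inv_mul, one_div]

theorem lintegral_Ioi_exp_neg_mul_sq_div_le {N c t : ℝ} (d : ℝ) {K : ℕ} (hN : 0 < N)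
    (hc : 0 < c) (hK : N < K) (ht : 0 < t) :
    ∫⁻ s in Ioi t, ENNReal.ofReal (exp (-c * d ^ 2 / s) * (t / s) ^ N * s⁻¹) ≤
      ENNReal.ofReal
        ((exp 1 * K.factorial / min 1 c ^ K / (K - N) + 1 / N) * (1 + d ^ 2 / t) ^ (-N)) := by
  have hβ : 0 < (K : ℝ) - N := by linarith
  rw [← Ioc_union_Ioi_eq_Ioi (le_add_of_nonneg_right (sq_nonneg d)),
    lintegral_union measurableSet_Ioi Ioc_disjoint_Ioi_same, add_mul,
    ENNReal.ofReal_add (by positivity) (by positivity)]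
  exact add_le_add (lintegral_Ioc_exp_neg_mul_sq_div_le d hc hK ht)
    (lintegral_Ioi_add_sq_exp_neg_mul_sq_div_le d hN hc.le ht)

/-- Let `N > 0`, `c > 0` and `K > N` an integer. Then for all `t > 0`
and `d ≥ 0`:
`∫₀^t (s/t)^{K-N} e^{-c d²/t} ds/s + ∫_t^∞ e^{-c d²/s} (t/s)^N ds/s
  ≤ C ( e^{-c d²/(2t)} + (1 + d²/t)^{-N} )`, with `C = C(N,K,c)`. -/
theorem stmt_11 (N c : ℝ) (hN : 0 < N) (hc : 0 < c) (K : ℕ) (hK : N < K) :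
    ∃ C > (0:ℝ), ∀ t d : ℝ, 0 < t → 0 ≤ d →
      (∫⁻ s in Ioo (0:ℝ) t,
          ENNReal.ofReal ((s / t) ^ ((K : ℝ) - N) * Real.exp (-c * d ^ 2 / t) * s⁻¹))
        + (∫⁻ s in Ioi t,
            ENNReal.ofReal (Real.exp (-c * d ^ 2 / s) * (t / s) ^ N * s⁻¹))
        ≤ ENNReal.ofReal
            (C * (Real.exp (-c * d ^ 2 / (2 * t)) + (1 + d ^ 2 / t) ^ (-N))) := by
  have hβ : 0 < (K : ℝ) - N := by linarith
  set D := exp 1 * K.factorial / min 1 c ^ K / (K - N) + 1 / N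
  have hD : 0 < D := by positivity
  refine ⟨1 / ((K : ℝ) - N) + D, by positivity, fun t d ht _ ↦ ?_⟩
  set E := exp (-c * d ^ 2 / (2 * t))
  set P := (1 + d ^ 2 / t) ^ (-N)
  have hE : 0 ≤ E := exp_nonneg _
  have hP : 0 ≤ P := rpow_nonneg (by positivity) _
  calc _ ≤ ENNReal.ofReal (E / ((K : ℝ) - N)) + ENNReal.ofReal (D * P) :=
        add_le_add (lintegral_Ioo_div_rpow_mul_exp_le d hβ hc.le ht)
          (lintegral_Ioi_exp_neg_mul_sq_div_le d hN hc hK ht)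
    _ = ENNReal.ofReal (E / ((K : ℝ) - N) + D * P) :=
        (ENNReal.ofReal_add (by positivity) (by positivity)).symm
    _ ≤ ENNReal.ofReal ((1 / ((K : ℝ) - N) + D) * (E + P)) := by
        refine ENNReal.ofReal_le_ofReal ?_
        have : 0 ≤ P / ((K : ℝ) - N) + D * E := by positivity
        linarith [show (1 / ((K : ℝ) - N) + D) * (E + P) =
          E / ((K : ℝ) - N) + D * P + (P / ((K : ℝ) - N) + D * E) by ring]
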